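/- arXiv:2407.09666 — 5 statements merged into one kernel-verified Lean document; each statement's English description precedes it below -/
import Mathlib

section
/- (Latyshev) Let A be a (not necessarily unital) associative algebra satisfying the identity a_1⋯a_n = a_{σ(1)}⋯a_{σ(n)} for some permutation σ ∈ S_n with σ(1) ≠ 1. Then for all k ≥ 1, all τ ∈ S_k, and all elements a_1,...,a_{k+n} ∈ A, one has a_1⋯a_{k+n} = a_{τ(1)}⋯a_{τ(k)} · a_{k+1}⋯a_{k+n}. -/
/-- Product of a nonempty list in a (non-unital) multiplicative structure;
junk value `0` for the empty list. -/
def listMul {A : Type*} [Mul A] [Zero A] : List A → A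
  | [] => 0
  | [x] => x
  | x :: y :: l => x * listMul (y :: l)

/-- The product `a 0 * a 1 * ⋯ * a (k-1)`. -/
def finProd {A : Type*} [Mul A] [Zero A] {k : ℕ} (a : Fin k → A) : A :=
  listMul (List.ofFn a)

/-!
Write `J = σ 0 ≠ 0` and work in the monoid `WithOne A`, where products of words make sense.
Applying the identity to `d` and to `d` with `d J` replaced by `c * d J` shows that a left factor
`c` can be absorbed into the `J`-th letter of any word `d` of length `n + 1`, just as a left factor
`y` is absorbed into its `0`-th letter. Since `J ≠ 0` these two absorptions commute, so
`x * y * d = y * x * d`: any two letters followed by at least `n + 1` letters may be swapped.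
Adjacent transpositions generate `S_k`.
-/

open Function

section WordProd

variable {A : Type*} [Semigroup A]

def wordProd (l : List A) : WithOne A :=
  (l.map ((↑) : A → WithOne A)).prod

@[simp]
theorem wordProd_nil : wordProd ([] : List A) = 1 := rfl

@[simp]
theorem wordProd_cons (a : A) (l : List A) : wordProd (a :: l) = a * wordProd l := by
  simp [wordProd]

@[simp]
theorem wordProd_append (l l' : List A) : wordProd (l ++ l') = wordProd l * wordProd l' := by
  simp [wordProd]

theorem coe_listMul [Zero A] : ∀ {l : List A}, l ≠ [] → ((listMul l : A) : WithOne A) = wordProd l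
  | [a], _ => by simp [listMul]
  | a :: b :: l, _ => by
    rw [listMul, WithOne.coe_mul, coe_listMul (List.cons_ne_nil b l), wordProd_cons a]

theorem coe_finProd [Zero A] {k : ℕ} (hk : k ≠ 0) (a : Fin k → A) :
    ((finProd a : A) : WithOne A) = wordProd (List.ofFn a) :=
  coe_listMul (by simpa using hk)

theorem wordProd_ofFn_update_zero {m : ℕ} (y : A) (d : Fin (m + 1) → A) :
    wordProd (List.ofFn (update d 0 (y * d 0))) = y * wordProd (List.ofFn d) := by
  simp [List.ofFn_succ, mul_assoc]

end WordProd

section PermutationIdentity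

variable {A : Type*} [Semigroup A] {n : ℕ} {σ : Equiv.Perm (Fin (n + 1))}
  (hid : ∀ b : Fin (n + 1) → A, wordProd (List.ofFn b) = wordProd (List.ofFn (b ∘ σ)))
include hid

theorem mul_wordProd_eq_update (c : A) (d : Fin (n + 1) → A) :
    c * wordProd (List.ofFn d) = wordProd (List.ofFn (update d (σ 0) (c * d (σ 0)))) := by
  rw [hid d, hid (update d _ _), update_comp_equiv, Equiv.symm_apply_apply]
  exact (wordProd_ofFn_update_zero c (d ∘ σ)).symm

variable (hσ : σ 0 ≠ 0)
include hσ

theorem mul_mul_wordProd_ofFn_comm (x y : A) (d : Fin (n + 1) → A) :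
    x * y * wordProd (List.ofFn d) = y * x * wordProd (List.ofFn d) := by
  have hxy : x * (y * wordProd (List.ofFn d)) =
      wordProd (List.ofFn (update (update d 0 (y * d 0)) (σ 0) (x * d (σ 0)))) := by
    rw [← wordProd_ofFn_update_zero, mul_wordProd_eq_update hid, update_of_ne hσ]
  have hyx : y * (x * wordProd (List.ofFn d)) =
      wordProd (List.ofFn (update (update d (σ 0) (x * d (σ 0))) 0 (y * d 0))) := by
    rw [mul_wordProd_eq_update hid, ← wordProd_ofFn_update_zero, update_of_ne hσ.symm]
  rw [mul_assoc, mul_assoc, hxy, hyx, update_comm hσ.symm]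

theorem mul_mul_wordProd_comm (x y : A) {t : List A} (ht : n + 1 ≤ t.length) :
    x * y * wordProd t = y * x * wordProd t := by
  obtain ⟨d, hd⟩ : ∃ d : Fin (n + 1) → A, List.ofFn d = t.take (n + 1) := by
    have hlen : (t.take (n + 1)).length = n + 1 := by simpa using ht
    exact ⟨_, (List.ofFn_congr hlen _).symm.trans List.ofFn_getElem⟩
  rw [← List.take_append_drop (n + 1) t, ← hd, wordProd_append, ← mul_assoc, ← mul_assoc,
    mul_mul_wordProd_ofFn_comm hid hσ]

theorem wordProd_mul_eq_of_perm {l l' : List A} (h : l.Perm l') {t : List A}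
    (ht : n + 1 ≤ t.length) : wordProd l * wordProd t = wordProd l' * wordProd t := by
  induction h with
  | nil => rfl
  | cons a _ ih => simp only [wordProd_cons, mul_assoc, ih]
  | swap a b l =>
    have hlt : n + 1 ≤ (l ++ t).length := by rw [List.length_append]; omega
    simpa only [wordProd_cons, wordProd_append, mul_assoc] using
      mul_mul_wordProd_comm hid hσ b a hlt
  | trans _ _ ih₁ ih₂ => exact ih₁.trans ih₂

end PermutationIdentity

theorem latyshev_general {A : Type*} [NonUnitalRing A]
    (n : ℕ) (σ : Equiv.Perm (Fin (n + 1))) (hσ : σ 0 ≠ 0)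
    (hid : ∀ b : Fin (n + 1) → A, finProd b = finProd (fun i => b (σ i)))
    (k : ℕ) (hk : 0 < k) (τ : Equiv.Perm (Fin k)) (a : Fin (k + (n + 1)) → A) :
    finProd a =
      finProd (fun i : Fin k => a (Fin.castAdd (n + 1) (τ i))) *
        finProd (fun i : Fin (n + 1) => a (Fin.natAdd k i)) := by
  have hid' : ∀ b : Fin (n + 1) → A, wordProd (List.ofFn b) = wordProd (List.ofFn (b ∘ σ)) :=
    fun b => by rw [← coe_finProd n.succ_ne_zero, ← coe_finProd n.succ_ne_zero, hid]; rfl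
  apply WithOne.coe_injective
  rw [WithOne.coe_mul, coe_finProd (by omega), coe_finProd hk.ne', coe_finProd n.succ_ne_zero,
    List.ofFn_add, wordProd_append]
  exact wordProd_mul_eq_of_perm hid' hσ (Equiv.Perm.ofFn_comp_perm τ _).symm (by simp)

theorem latyshev {F A : Type*} [Field F] [NonUnitalRing A] [Module F A]
    [SMulCommClass F A A] [IsScalarTower F A A]
    (n : ℕ) (σ : Equiv.Perm (Fin (n + 1))) (hσ : σ 0 ≠ 0)
    (hid : ∀ b : Fin (n + 1) → A, finProd b = finProd (fun i => b (σ i)))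
    (k : ℕ) (hk : 0 < k) (τ : Equiv.Perm (Fin k)) (a : Fin (k + (n + 1)) → A) :
    finProd a =
      finProd (fun i : Fin k => a (Fin.castAdd (n + 1) (τ i))) *
        finProd (fun i : Fin (n + 1) => a (Fin.natAdd k i)) :=
  latyshev_general n σ hσ hid k hk τ a
end

section
/- Let A be a (not necessarily unital) associative algebra satisfying a_1⋯a_n = a_{σ(1)}⋯a_{σ(n)} for some σ ∈ S_n with σ(1) ≠ 1. Then for all a_1,...,a_n, y_1, y_2 ∈ A, one has y_1 y_2 a_1⋯a_n = y_2 y_1 a_1⋯a_n. -/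
lemma listMul_cons_mul {A : Type*} [Semigroup A] [Zero A] (y x : A) (l : List A) :
    listMul ((y * x) :: l) = y * listMul (x :: l) := by
  cases l with
  | nil => rfl
  | cons z l => show (y * x) * listMul (z :: l) = y * (x * listMul (z :: l)); rw [mul_assoc]

lemma finProd_update_zero {A : Type*} [Semigroup A] [Zero A] {n : ℕ}
    (a : Fin (n + 1) → A) (y : A) :
    finProd (Function.update a 0 (y * a 0)) = y * finProd a := by
  unfold finProd
  rw [List.ofFn_succ, List.ofFn_succ (f := a)]
  have h1 : Function.update a 0 (y * a 0) 0 = y * a 0 := Function.update_self _ _ _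
  have h2 : ∀ i : Fin n, Function.update a 0 (y * a 0) i.succ = a i.succ := fun i =>
    Function.update_of_ne (Fin.succ_ne_zero i) _ _
  simp only [h1, h2]
  exact listMul_cons_mul _ _ _

lemma finProd_update_sigma {A : Type*} [Semigroup A] [Zero A] {n : ℕ}
    (σ : Equiv.Perm (Fin (n + 1)))
    (hid : ∀ b : Fin (n + 1) → A, finProd b = finProd (fun i => b (σ i)))
    (a : Fin (n + 1) → A) (y : A) :
    finProd (Function.update a (σ 0) (y * a (σ 0))) = y * finProd a := by
  set c := Function.update a (σ 0) (y * a (σ 0)) with hc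
  have key : finProd c = finProd (fun i => c (σ i)) := hid c
  have h1 : c (σ 0) = y * a (σ 0) := Function.update_self _ _ _
  have h2 : ∀ i : Fin n, c (σ i.succ) = a (σ i.succ) := fun i =>
    Function.update_of_ne (fun h => Fin.succ_ne_zero i (σ.injective h)) _ _
  rw [key]
  show listMul (List.ofFn fun i => c (σ i)) = y * finProd a
  rw [List.ofFn_succ]
  simp only [h1, h2]
  rw [listMul_cons_mul]
  have : listMul (a (σ 0) :: List.ofFn fun i : Fin n => a (σ i.succ)) =
      finProd (fun i => a (σ i)) := by
    unfold finProd; rw [List.ofFn_succ]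
  rw [this, ← hid a]

theorem left_commutator_absorbed {F A : Type*} [Field F] [NonUnitalRing A] [Module F A]
    [SMulCommClass F A A] [IsScalarTower F A A]
    (n : ℕ) (σ : Equiv.Perm (Fin (n + 1))) (hσ : σ 0 ≠ 0)
    (hid : ∀ b : Fin (n + 1) → A, finProd b = finProd (fun i => b (σ i)))
    (y₁ y₂ : A) (a : Fin (n + 1) → A) :
    y₁ * y₂ * finProd a = y₂ * y₁ * finProd a := by
  set t := σ 0 with ht
  have e0t : ∀ b : Fin (n + 1) → A, ∀ v, Function.update b 0 v t = b t := fun b v =>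
    Function.update_of_ne hσ _ _
  have et0 : ∀ b : Fin (n + 1) → A, ∀ v, Function.update b t v 0 = b 0 := fun b v =>
    Function.update_of_ne (Ne.symm hσ) _ _
  have key : finProd (Function.update (Function.update a 0 (y₂ * a 0)) t
      (y₁ * Function.update a 0 (y₂ * a 0) t)) =
      finProd (Function.update (Function.update a t (y₁ * a t)) 0
      (y₂ * Function.update a t (y₁ * a t) 0)) := by
    rw [e0t, et0, Function.update_comm hσ.symm]
  have h1 := finProd_update_sigma σ hid (Function.update a 0 (y₂ * a 0)) y₁
  have h2 := finProd_update_zero (Function.update a t (y₁ * a t)) y₂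
  rw [key, h2, finProd_update_sigma σ hid a y₁] at h1
  rw [finProd_update_zero a y₂] at h1
  rw [mul_assoc, mul_assoc, h1]
end

section
/- Let A be a (not necessarily unital) associative algebra satisfying a_1⋯a_n = a_{σ(1)}⋯a_{σ(n)} for some σ ∈ S_n with σ(n) ≠ n. Then for all a_1,...,a_n, y_1, y_2 ∈ A, one has a_1⋯a_n y_1 y_2 = a_1⋯a_n y_2 y_1. -/
/-!
Since `σ(n) ≠ n`, the identity carries the factor in slot `σ(n)` to the end of the product, so a
right factor can be absorbed into that slot: `a₁⋯aₙ · y` is the product with `a_{σ(n)}` replaced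
by `a_{σ(n)} y`. A right factor can also be absorbed into the last slot. The two slots differ, so
these absorptions commute, and `a₁⋯aₙ y₁ y₂ = a₁⋯aₙ y₂ y₁` follows.
-/

open Function

section Semigroup

variable {A : Type*} [Semigroup A] [Zero A] {n : ℕ}

theorem listMul_cons_of_ne_nil (a : A) {l : List A} (hl : l ≠ []) :
    listMul (a :: l) = a * listMul l := by
  cases l with
  | nil => exact absurd rfl hl
  | cons b l => rfl

theorem listMul_append_singleton_mul (l : List A) (x y : A) :
    listMul (l ++ [x * y]) = listMul (l ++ [x]) * y := by
  induction l with
  | nil => rfl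
  | cons a l ih =>
    rw [List.cons_append, List.cons_append, listMul_cons_of_ne_nil _ (by simp),
      listMul_cons_of_ne_nil _ (by simp), ih, mul_assoc]

theorem finProd_update_last_mul (c : Fin (n + 1) → A) (x y : A) :
    finProd (update c (Fin.last n) (x * y)) = finProd (update c (Fin.last n) x) * y := by
  simp only [finProd, List.ofFn_succ', List.concat_eq_append, update_self,
    update_of_ne (Fin.castSucc_ne_last _), listMul_append_singleton_mul]

theorem finProd_mul_eq_update_last (c : Fin (n + 1) → A) (y : A) :
    finProd c * y = finProd (update c (Fin.last n) (c (Fin.last n) * y)) := by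
  rw [finProd_update_last_mul, update_eq_self]

variable {σ : Equiv.Perm (Fin (n + 1))}

theorem finProd_update_perm_last_mul
    (hid : ∀ b : Fin (n + 1) → A, finProd b = finProd (fun i => b (σ i)))
    (c : Fin (n + 1) → A) (x y : A) :
    finProd (update c (σ (Fin.last n)) (x * y)) =
      finProd (update c (σ (Fin.last n)) x) * y := by
  rw [hid, hid (update c _ x)]
  simp only [← comp_apply (g := σ), update_comp_eq_of_injective _ σ.injective]
  exact finProd_update_last_mul _ x y

theorem finProd_mul_eq_update_perm_last
    (hid : ∀ b : Fin (n + 1) → A, finProd b = finProd (fun i => b (σ i)))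
    (c : Fin (n + 1) → A) (y : A) :
    finProd c * y = finProd (update c (σ (Fin.last n)) (c (σ (Fin.last n)) * y)) := by
  rw [finProd_update_perm_last_mul hid, update_eq_self]

end Semigroup

theorem right_commutator_absorbed_general {A : Type*} [NonUnitalRing A]
    (n : ℕ) (σ : Equiv.Perm (Fin (n + 1))) (hσ : σ (Fin.last n) ≠ Fin.last n)
    (hid : ∀ b : Fin (n + 1) → A, finProd b = finProd (fun i => b (σ i)))
    (y₁ y₂ : A) (a : Fin (n + 1) → A) :
    finProd a * (y₁ * y₂) = finProd a * (y₂ * y₁) := by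
  set q := σ (Fin.last n)
  set l := Fin.last n
  calc finProd a * (y₁ * y₂)
      = finProd (update a q (a q * y₁)) * y₂ := by
        rw [← mul_assoc, finProd_mul_eq_update_perm_last hid]
    _ = finProd (update (update a q (a q * y₁)) l (a l * y₂)) := by
        rw [finProd_mul_eq_update_last, update_of_ne hσ.symm]
    _ = finProd (update (update a l (a l * y₂)) q (a q * y₁)) := by
        rw [update_comm hσ]
    _ = finProd (update a l (a l * y₂)) * y₁ := by
        rw [finProd_update_perm_last_mul hid, ← update_of_ne hσ (a l * y₂) a, update_eq_self]
    _ = finProd a * (y₂ * y₁) := by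
        rw [← finProd_mul_eq_update_last, mul_assoc]

theorem right_commutator_absorbed {F A : Type*} [Field F] [NonUnitalRing A] [Module F A]
    [SMulCommClass F A A] [IsScalarTower F A A]
    (n : ℕ) (σ : Equiv.Perm (Fin (n + 1))) (hσ : σ (Fin.last n) ≠ Fin.last n)
    (hid : ∀ b : Fin (n + 1) → A, finProd b = finProd (fun i => b (σ i)))
    (y₁ y₂ : A) (a : Fin (n + 1) → A) :
    finProd a * (y₁ * y₂) = finProd a * (y₂ * y₁) :=
  right_commutator_absorbed_general n σ hσ hid y₁ y₂ a
end

section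
/- Let A be a (not necessarily unital) associative algebra satisfying a_1⋯a_n = a_{σ(1)}⋯a_{σ(n)} for some σ ∈ S_n with σ(1) = i ≠ 1. Then A satisfies the degree-(n+1) identity corresponding to the cycle (1 2 ... i): for all a_1,...,a_{n+1} ∈ A, a_1 a_2 ⋯ a_{n+1} = a_2 a_3 ⋯ a_i a_1 a_{i+1} ⋯ a_{n+1}. -/
/-!
Write the `n + 2` factors as `x, b₀, …, bₙ`. The identity turns `x · b₀ ⋯ bₙ` into
`x · b_{σ 0} ⋯ b_{σ n}`; absorbing `x` into the first factor and applying the identity backwards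
to the tuple `b` with `b_{σ 0}` replaced by `x · b_{σ 0}` gives `b₀ ⋯ (x · b_{σ 0}) ⋯ bₙ`, which is
the product of the `a`'s permuted by the cycle.
-/

theorem finProd_cons {A : Type*} [Mul A] [Zero A] {k : ℕ} (x : A) (b : Fin (k + 1) → A) :
    finProd (Fin.cons x b : Fin (k + 2) → A) = x * finProd b := by
  simp only [finProd, List.ofFn_succ, Fin.cons_zero, Fin.cons_succ]
  rfl

section Semigroup

variable {A : Type*} [Semigroup A] [Zero A]

theorem mul_finProd {k : ℕ} (x : A) (b : Fin (k + 1) → A) :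
    x * finProd b = finProd (Function.update b 0 (x * b 0)) := by
  cases k with
  | zero => simp [finProd, List.ofFn_succ, listMul]
  | succ k =>
    rw [← Fin.cons_self_tail b, finProd_cons, Fin.update_cons_zero, finProd_cons, Fin.cons_zero,
      mul_assoc]

theorem finProd_insertNth_castSucc {k : ℕ} (x : A) (b : Fin (k + 1) → A) (i : Fin (k + 1)) :
    finProd (Fin.insertNth i.castSucc x b) = finProd (Function.update b i (x * b i)) := by
  induction k with
  | zero =>
    rw [Fin.fin_one_eq_zero i, Fin.castSucc_zero, Fin.insertNth_zero', finProd_cons, mul_finProd]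
  | succ k ih =>
    induction i using Fin.cases with
    | zero => rw [Fin.castSucc_zero, Fin.insertNth_zero', finProd_cons, mul_finProd]
    | succ j =>
      rw [← Fin.cons_self_tail b, ← Fin.succ_castSucc, Fin.insertNth_succ_cons, finProd_cons, ih,
        Fin.cons_succ, ← Fin.cons_update, finProd_cons]

end Semigroup

theorem cycle_identity_degree_succ_general {A : Type*} [NonUnitalRing A]
    (n : ℕ) (σ : Equiv.Perm (Fin (n + 1)))
    (hid : ∀ b : Fin (n + 1) → A, finProd b = finProd (fun i => b (σ i))) :
    ∀ a : Fin (n + 2) → A,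
      finProd a = finProd (fun j => a (Fin.cycleRange ((σ 0).castSucc) j)) := by
  intro a
  induction a using Fin.consCases with
  | cons x b =>
    let b' := Function.update b (σ 0) (x * b (σ 0))
    calc finProd (Fin.cons x b : Fin (n + 2) → A)
        = x * finProd (b ∘ σ) := by rw [finProd_cons, hid b]; rfl
      _ = finProd (b' ∘ σ) := by
        rw [mul_finProd, Function.update_comp_equiv, Equiv.symm_apply_apply]; rfl
      _ = finProd b' := (hid b').symm
      _ = finProd ((Fin.cons x b : Fin (n + 2) → A) ∘ (σ 0).castSucc.cycleRange) := by
        rw [Fin.cons_comp_cycleRange, finProd_insertNth_castSucc]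

theorem cycle_identity_degree_succ {F A : Type*} [Field F] [NonUnitalRing A] [Module F A]
    [SMulCommClass F A A] [IsScalarTower F A A]
    (n : ℕ) (σ : Equiv.Perm (Fin (n + 1))) (hσ : σ 0 ≠ 0)
    (hid : ∀ b : Fin (n + 1) → A, finProd b = finProd (fun i => b (σ i))) :
    ∀ a : Fin (n + 2) → A,
      finProd a = finProd (fun j => a (Fin.cycleRange ((σ 0).castSucc) j)) :=
  cycle_identity_degree_succ_general n σ hid
end

section
/- Let A be a (not necessarily unital) associative algebra satisfying generalized commutativity of degree n ≥ 2 (a_1⋯a_n = a_n⋯a_1). If n ≢ 1 (mod 4), then A is eventually commutative of degree n+1; in general (including n ≡ 1 mod 4), A is eventually commutative of degree n+2. -/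
@[simp]
lemma List.flatten_map_singleton {α : Type*} (l : List α) :
    (l.map fun a => [a]).flatten = l := by
  induction l <;> simp_all

lemma List.apply_rotate_one_eq_of_odd_length {α β : Type*} (f : List α → β) {m : ℕ}
    (hm : Odd m) (h : ∀ l : List α, l.length = m → f (l.rotate 2) = f l)
    (l : List α) (hl : l.length = m) : f (l.rotate 1) = f l := by
  have hiter (j : ℕ) : f (l.rotate (2 * j)) = f l := by
    induction j with
    | zero => simp
    | succ j ih => rw [Nat.mul_succ, ← List.rotate_rotate, h _ (by simp [hl]), ih]
  obtain ⟨k, rfl⟩ := hm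
  rw [← hiter (k + 1), ← List.rotate_mod l (2 * (k + 1)), hl,
    show 2 * (k + 1) = 1 + (2 * k + 1) by ring, Nat.add_mod_right, ← hl, List.rotate_mod]

lemma Nat.choose_two_mod_two (n : ℕ) : n.choose 2 % 2 = n / 2 % 2 := by
  induction n with
  | zero => rfl
  | succ n ih =>
    rw [Nat.choose_succ_succ' n 1, Nat.choose_one_right]
    simp only [Nat.reduceAdd]
    rcases Nat.even_or_odd' n with ⟨k, rfl | rfl⟩ <;> omega

lemma listMul_cons_of_ne_nil_s17 {A : Type*} [Mul A] [Zero A] (x : A) {l : List A} (h : l ≠ []) :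
    listMul (x :: l) = x * listMul l := by
  cases l with
  | nil => exact absurd rfl h
  | cons y t => rfl

section Semigroup

variable {A : Type*} [Semigroup A] [Zero A]

lemma listMul_append {l₁ l₂ : List A} (h₁ : l₁ ≠ []) (h₂ : l₂ ≠ []) :
    listMul (l₁ ++ l₂) = listMul l₁ * listMul l₂ := by
  induction l₁ with
  | nil => exact absurd rfl h₁
  | cons x t ih =>
    rcases eq_or_ne t [] with rfl | ht
    · exact listMul_cons_of_ne_nil_s17 x h₂
    · rw [List.cons_append, listMul_cons_of_ne_nil_s17 x (by simp [ht]),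
        listMul_cons_of_ne_nil_s17 x ht, ih ht, mul_assoc]

lemma listMul_flatten {L : List (List A)} (h : ∀ l ∈ L, l ≠ []) :
    listMul L.flatten = listMul (L.map listMul) := by
  induction L with
  | nil => rfl
  | cons l L ih =>
    have hl : l ≠ [] := h l (by simp)
    have ih := ih fun l' hl' => h l' (by simp [hl'])
    rcases eq_or_ne L [] with rfl | hL
    · simp [listMul]
    · have hflat : L.flatten ≠ [] := by
        simpa [List.flatten_eq_nil_iff] using ⟨L.head hL, L.head_mem hL, h _ (by simp)⟩
      rw [List.flatten_cons, listMul_append hl hflat, ih, List.map_cons,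
        listMul_cons_of_ne_nil_s17 _ (by simpa using hL)]

end Semigroup

section Invariance

variable (A : Type*) [Mul A] [Zero A]

def ReverseInvariant (m : ℕ) : Prop :=
  ∀ l : List A, l.length = m → listMul l.reverse = listMul l

def SwapReverse (m : ℕ) : Prop :=
  ∀ (u : List A) (x y : A) (w : List A), u.length + w.length + 2 = m →
    listMul (u ++ y :: x :: w) = listMul (u ++ x :: y :: w).reverse

def SwapInvariant (m : ℕ) : Prop :=
  ∀ (u : List A) (x y : A) (w : List A), u.length + w.length + 2 = m →
    listMul (u ++ y :: x :: w) = listMul (u ++ x :: y :: w)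

end Invariance

section Parity

variable {A : Type*} [Mul A] [Zero A] {m n : ℕ}

lemma reverseInvariant_of_finProd
    (hrev : ∀ a : Fin n → A, finProd a = finProd (fun i => a (Fin.revPerm i))) :
    ReverseInvariant A n := by
  rintro l rfl
  have hl : List.ofFn (fun i : Fin l.length => l[(Fin.revPerm i : ℕ)]) = l.reverse := by
    refine List.ext_getElem (by simp) fun i h₁ h₂ => ?_
    simp only [List.getElem_ofFn, Fin.revPerm_apply, Fin.val_rev, List.getElem_reverse]
    congr 1
    omega
  have := hrev fun i => l[(i : ℕ)]
  rwa [finProd, finProd, List.ofFn_getElem, hl, eq_comm] at this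

lemma SwapReverse.listMul_reverse (hsr : SwapReverse A m) (u : List A) (x y : A) (w : List A)
    (h : u.length + w.length + 2 = m) :
    listMul (u ++ y :: x :: w).reverse = listMul (u ++ x :: y :: w) := by
  simpa using hsr w.reverse y x u.reverse (by simp; omega)

lemma SwapReverse.swapInvariant (hsr : SwapReverse A m) (hrev : ReverseInvariant A m) :
    SwapInvariant A m := fun u x y w h => by
  rw [hsr u x y w h, hrev _ (by simp; omega)]

/-- Under `SwapReverse A m`, `k` counts the adjacent swaps applied to a word of length `m`. -/
def parityProd (k : ℕ) (l : List A) : A :=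
  if Even k then listMul l else listMul l.reverse

lemma parityProd_zero (l : List A) : parityProd 0 l = listMul l := by
  simp [parityProd]

lemma parityProd_of_odd {k : ℕ} (hk : Odd k) (l : List A) :
    parityProd k l = listMul l.reverse := by
  simp [parityProd, Nat.not_even_iff_odd.2 hk]

lemma SwapReverse.parityProd_swap (hsr : SwapReverse A m) (k : ℕ) (u : List A) (x y : A)
    (w : List A) (h : u.length + w.length + 2 = m) :
    parityProd (k + 1) (u ++ y :: x :: w) = parityProd k (u ++ x :: y :: w) := by
  unfold parityProd
  by_cases hk : Even k
  · rw [if_neg (by simpa [Nat.even_add_one] using hk), if_pos hk, hsr.listMul_reverse u x y w h]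
  · rw [if_pos (by simpa [Nat.even_add_one] using hk), if_neg hk, hsr u x y w h]

lemma SwapReverse.parityProd_move (hsr : SwapReverse A m) (k : ℕ) (u : List A) (x : A)
    (U w : List A) (h : u.length + U.length + w.length + 1 = m) :
    parityProd k (u ++ x :: (U ++ w)) = parityProd (k + U.length) (u ++ (U ++ x :: w)) := by
  induction U generalizing k u with
  | nil => simp
  | cons y U ih =>
    calc parityProd k (u ++ x :: (y :: U ++ w))
        = parityProd (k + 1) ((u ++ [y]) ++ x :: (U ++ w)) := by
          simpa using (hsr.parityProd_swap k u x y (U ++ w) (by simp at h ⊢; omega)).symm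
      _ = parityProd (k + (y :: U).length) (u ++ (y :: U ++ x :: w)) := by
          rw [ih (k + 1) (u ++ [y]) (by simp at h ⊢; omega)]
          simp [Nat.add_right_comm, Nat.add_assoc]

lemma SwapReverse.parityProd_reverse_segment (hsr : SwapReverse A m) (k : ℕ)
    (u U w : List A) (h : u.length + U.length + w.length = m) :
    parityProd k (u ++ U ++ w) = parityProd (k + U.length.choose 2) (u ++ U.reverse ++ w) := by
  induction U generalizing k w with
  | nil => simp
  | cons x U ih =>
    calc parityProd k (u ++ x :: U ++ w)
        = parityProd (k + U.length) (u ++ U ++ x :: w) := by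
          simpa using hsr.parityProd_move k u x U w (by simp at h ⊢; omega)
      _ = parityProd (k + (x :: U).length.choose 2) (u ++ (x :: U).reverse ++ w) := by
          rw [ih _ _ (by simp at h ⊢; omega), List.length_cons, Nat.choose_succ_succ',
            Nat.choose_one_right]
          simp [Nat.add_assoc]

lemma SwapReverse.reverseInvariant_of_even_choose_two (hsr : SwapReverse A m) (h : Even (m.choose 2)) :
    ReverseInvariant A m := by
  rintro l rfl
  have := hsr.parityProd_reverse_segment 0 [] l [] (by simp)
  simpa [parityProd_zero, parityProd, h] using this.symm

lemma ReverseInvariant.reverseInvariant_succ_of_odd_choose_two (hrev : ReverseInvariant A n)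
    (hsr : SwapReverse A (n + 1)) (h : Odd (n.choose 2)) : ReverseInvariant A (n + 1) := by
  rintro (_ | ⟨x, W⟩) hl
  · simp at hl
  have hW : W.length = n := by simpa using hl
  have hW₀ : W ≠ [] := by
    rintro rfl
    simp [← hW] at h
  -- reversing the tail `W` is free by `hrev`, and costs an odd number of swaps otherwise
  have hswaps := hsr.parityProd_reverse_segment 0 [x] W.reverse [] (by simp [hW, Nat.add_comm])
  rw [parityProd_zero, List.length_reverse, hW, parityProd_of_odd (by simpa using h)] at hswaps
  simp only [List.singleton_append, List.append_nil, List.reverse_reverse] at hswaps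
  rw [← hswaps, listMul_cons_of_ne_nil_s17 x hW₀, listMul_cons_of_ne_nil_s17 x (by simpa using hW₀),
    hrev W hW]

lemma SwapInvariant.listMul_append_perm (hsw : SwapInvariant A m) {l₁ l₂ : List A}
    (hp : l₁.Perm l₂) (u : List A) (h : (u ++ l₁).length = m) :
    listMul (u ++ l₁) = listMul (u ++ l₂) := by
  induction hp generalizing u with
  | nil => rfl
  | cons x _ ih => simpa using ih (u ++ [x]) (by simpa using h)
  | swap x y l => exact hsw u x y l (by simp at h ⊢; omega)
  | trans hp₁ _ ih₁ ih₂ => rw [ih₁ u h, ih₂ u (by simpa [hp₁.length_eq] using h)]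

lemma SwapInvariant.finProd_comp_perm (hsw : SwapInvariant A m) (τ : Equiv.Perm (Fin m))
    (a : Fin m → A) : finProd a = finProd (fun i => a (τ i)) :=
  hsw.listMul_append_perm (τ.ofFn_comp_perm a).symm [] (by simp)

end Parity

section Gluing

variable {A : Type*} [Semigroup A] [Zero A] {m n : ℕ}

lemma ReverseInvariant.listMul_flatten_reverse (hrev : ReverseInvariant A n)
    {L : List (List A)} (hL : L.length = n) (h : ∀ l ∈ L, l ≠ []) :
    listMul L.reverse.flatten = listMul L.flatten := by
  rw [listMul_flatten h, listMul_flatten fun l hl => h l (List.mem_reverse.1 hl),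
    List.map_reverse, hrev _ (by simp [hL])]

lemma ReverseInvariant.swapReverse_succ (hrev : ReverseInvariant A n) :
    SwapReverse A (n + 1) := by
  intro u x y w h
  have := hrev.listMul_flatten_reverse
    (L := u.map (fun a => [a]) ++ [y, x] :: w.map (fun a => [a])) (by simp; omega)
    (by simp [or_imp, forall_and])
  simpa [← List.map_reverse] using this.symm

lemma ReverseInvariant.reverseInvariant_succ (hrev : ReverseInvariant A n) (hn : n % 4 ≠ 1) :
    ReverseInvariant A (n + 1) := by
  have hsr := hrev.swapReverse_succ
  by_cases h : n % 4 = 2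
  · exact hrev.reverseInvariant_succ_of_odd_choose_two hsr
      (Nat.odd_iff.2 (by rw [Nat.choose_two_mod_two]; omega))
  · exact hsr.reverseInvariant_of_even_choose_two
      (Nat.even_iff.2 (by rw [Nat.choose_two_mod_two]; omega))

lemma SwapInvariant.succ (hsw : SwapInvariant A m) (hm : 2 ≤ m) : SwapInvariant A (m + 1) := by
  rintro (_ | ⟨a, u⟩) x y w h
  · obtain ⟨w, z, rfl⟩ := w.eq_nil_or_concat.resolve_left (by rintro rfl; simp at h; omega)
    have hswap := hsw [] x y w (by simp at h ⊢; omega)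
    simp only [List.nil_append, List.concat_eq_append, ← List.cons_append] at hswap ⊢
    rw [listMul_append (by simp) (by simp), listMul_append (by simp) (by simp), hswap]
  · simp only [List.cons_append]
    rw [listMul_cons_of_ne_nil_s17 a (by simp), listMul_cons_of_ne_nil_s17 a (by simp),
      hsw u x y w (by simp at h ⊢; omega)]

lemma SwapReverse.listMul_rotate_two (hsr : SwapReverse A (n + 1)) (hn : 2 ≤ n)
    (l : List A) (hl : l.length = n + 2) : listMul (l.rotate 2) = listMul l := by
  match l, hl with
  | x :: z :: M, hl =>
    simp only [List.length_cons, Nat.add_right_cancel_iff] at hl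
    obtain ⟨M, a, rfl⟩ := M.eq_nil_or_concat.resolve_left (by rintro rfl; simp at hl; omega)
    obtain ⟨N, b, rfl⟩ := M.eq_nil_or_concat.resolve_left (by rintro rfl; simp at hl; omega)
    simp only [List.concat_eq_append, List.append_assoc, List.singleton_append,
      List.length_append, List.length_cons, List.length_nil] at hl ⊢
    have hright : listMul (z :: (N ++ [b, a])) = listMul (b :: a :: (N.reverse ++ [z])) := by
      simpa using hsr (z :: N) a b [] (by simp; omega)
    have hleft : listMul (x :: b :: a :: N.reverse) = listMul (N ++ [b, a, x]) := by
      simpa using hsr [x] a b N.reverse (by simp; omega)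
    have hrot : (x :: z :: (N ++ [b, a])).rotate 2 = N ++ [b, a, x] ++ [z] := by
      simp [List.rotate_cons_succ]
    rw [hrot, listMul_append (by simp) (by simp), ← hleft, ← listMul_append (by simp) (by simp),
      List.cons_append, listMul_cons_of_ne_nil_s17 x (by simp), listMul_cons_of_ne_nil_s17 x (by simp),
      hright]
    rfl

lemma SwapReverse.swapReverse_add_two (hsr : SwapReverse A (n + 1)) (hn : 2 ≤ n)
    (hodd : Odd n) : SwapReverse A (n + 2) := by
  have hrot (x : A) (l : List A) (hl : l.length = n + 1) :
      listMul (l ++ [x]) = listMul (x :: l) := by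
    simpa [List.rotate_cons_succ] using List.apply_rotate_one_eq_of_odd_length listMul
      (by simpa [parity_simps] using hodd) (hsr.listMul_rotate_two hn) (x :: l) (by simp [hl])
  rintro (_ | ⟨a, u⟩) x y w h
  · obtain ⟨w, z, rfl⟩ := w.eq_nil_or_concat.resolve_left (by rintro rfl; simp at h; omega)
    have hswap := hsr [] x y w (by simp at h ⊢; omega)
    simp only [List.nil_append, List.concat_eq_append, ← List.cons_append] at hswap ⊢
    rw [listMul_append (by simp) (by simp), hswap, ← listMul_append (by simp) (by simp),
      hrot z _ (by simp at h ⊢; omega)]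
    simp
  · have hswap := hsr u x y w (by simp at h ⊢; omega)
    rw [List.cons_append, listMul_cons_of_ne_nil_s17 a (by simp), hswap,
      ← listMul_cons_of_ne_nil_s17 a (by simp), ← hrot a _ (by simp at h ⊢; omega)]
    simp

lemma ReverseInvariant.reverseInvariant_add_two (hrev : ReverseInvariant A n)
    (hsr : SwapReverse A (n + 2)) (hn : 2 ≤ n) : ReverseInvariant A (n + 2) := by
  intro l hl
  match l, hl with
  | [_, _], hl | [_, _, _], hl => simp at hl; omega
  | p :: q :: r :: s :: w, hl =>
    simp only [List.length_cons] at hl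
    -- glue the pairs `q p` and `s r` into single letters
    have hglue := hrev.listMul_flatten_reverse (L := [q, p] :: [s, r] :: w.map fun a => [a])
      (by simp; omega) (by simp)
    simp only [List.reverse_cons, List.flatten_append, ← List.map_reverse,
      List.flatten_map_singleton, List.flatten_cons, List.flatten_nil] at hglue
    calc listMul (p :: q :: r :: s :: w).reverse
        = listMul (q :: p :: s :: r :: w) := by simpa using hglue
      _ = listMul (p :: q :: s :: r :: w).reverse := hsr [] p q (s :: r :: w) (by simp; omega)
      _ = listMul (p :: q :: r :: s :: w) := hsr.listMul_reverse [p, q] r s w (by simp; omega)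

end Gluing

theorem generalized_comm_eventually_commutative_general {A : Type*} [NonUnitalRing A]
    (n : ℕ) (hn : 2 ≤ n)
    (hrev : ∀ a : Fin n → A, finProd a = finProd (fun i => a (Fin.revPerm i))) :
    ((n % 4 ≠ 1) →
      ∀ τ : Equiv.Perm (Fin (n + 1)), ∀ a : Fin (n + 1) → A,
        finProd a = finProd (fun i => a (τ i))) ∧
    (∀ τ : Equiv.Perm (Fin (n + 2)), ∀ a : Fin (n + 2) → A,
      finProd a = finProd (fun i => a (τ i))) := by
  have hrevn : ReverseInvariant A n := reverseInvariant_of_finProd hrev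
  have hsw (hmod : n % 4 ≠ 1) : SwapInvariant A (n + 1) :=
    hrevn.swapReverse_succ.swapInvariant (hrevn.reverseInvariant_succ hmod)
  refine ⟨fun hmod => (hsw hmod).finProd_comp_perm, ?_⟩
  by_cases hmod : n % 4 = 1
  · have hsr : SwapReverse A (n + 2) :=
      hrevn.swapReverse_succ.swapReverse_add_two hn (Nat.odd_iff.2 (by omega))
    exact (hsr.swapInvariant (hrevn.reverseInvariant_add_two hsr hn)).finProd_comp_perm
  · exact ((hsw hmod).succ (by omega)).finProd_comp_perm

theorem generalized_comm_eventually_commutative {F A : Type*} [Field F] [NonUnitalRing A] [Module F A]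
    [SMulCommClass F A A] [IsScalarTower F A A]
    (n : ℕ) (hn : 2 ≤ n)
    (hrev : ∀ a : Fin n → A, finProd a = finProd (fun i => a (Fin.revPerm i))) :
    ((n % 4 ≠ 1) →
      ∀ τ : Equiv.Perm (Fin (n + 1)), ∀ a : Fin (n + 1) → A,
        finProd a = finProd (fun i => a (τ i))) ∧
    (∀ τ : Equiv.Perm (Fin (n + 2)), ∀ a : Fin (n + 2) → A,
      finProd a = finProd (fun i => a (τ i))) :=
  generalized_comm_eventually_commutative_general n hn hrev
end
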